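/- Let $(A_k)$ be a family of complex $l \times l$ matrices, each diagonalizable as $A_k = \Lambda_k D_k \Lambda_k^{-1}$ with $D_k$ diagonal. Suppose $\|D_k\| \leq 1 + c_1\epsilon$ and $\|\Lambda_{p}^{-1}\Lambda_{p-1}\| \leq 1 + c_2\epsilon$ for all relevant indices, with constants $c_1, c_2$ independent of $\epsilon$ and of the indices, and suppose $\|\Lambda_k\|, \|\Lambda_k^{-1}\|$ are bounded by a constant $M$. Then there exists a constant $C$ (depending only on $c_1, c_2, M$) such that for all $j < k$ with $(k-j)\epsilon \leq 1$, $\|A_k A_{k-1}\cdots A_{j+1}\| \leq C$. -/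

import Mathlib

/-!
Writing `A k = Λ k D k Λ k⁻¹`, the inner factors telescope:
`A k ⋯ A (j+1) = Λ k · (D k Λ k⁻¹ Λ (k-1)) ⋯ (D (j+1) Λ (j+1)⁻¹ Λ j) · Λ j⁻¹`.
Each bracket has norm at most `(1 + c₁ε)(1 + c₂ε) ≤ exp ((c₁ + c₂) ε)`, so the `k - j ≤ ε⁻¹`
brackets together contribute at most `exp (max (c₁ + c₂) 0)`, and the outer factors at most `M²`.
-/

open Finset

attribute [local instance] Matrix.linftyOpNormedAddCommGroup Matrix.linftyOpNormedRing

/-- The ordered product `A k * A (k-1) * ⋯ * A (j+1)`. -/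
def prodDesc {M : Type*} [Monoid M] (A : ℕ → M) (j k : ℕ) : M :=
  ((List.range (k - j)).map (fun i => A (k - i))).prod

section prodDesc

variable {M : Type*}

@[simp]
lemma prodDesc_self [Monoid M] (A : ℕ → M) (j : ℕ) : prodDesc A j j = 1 := by
  simp [prodDesc]

lemma prodDesc_succ [Monoid M] (A : ℕ → M) {j k : ℕ} (h : j ≤ k) :
    prodDesc A j (k + 1) = A (k + 1) * prodDesc A j k := by
  unfold prodDesc
  rw [show k + 1 - j = (k - j) + 1 by omega, List.range_succ_eq_map]
  have hshift : (fun i => A (k + 1 - (i + 1))) = fun i => A (k - i) :=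
    funext fun i => by congr 1; omega
  simp only [List.map_cons, List.map_map, List.prod_cons, Nat.sub_zero, Function.comp_def, hshift]

lemma prodDesc_conj [Monoid M] (P : ℕ → Mˣ) (D : ℕ → M) {j k : ℕ} (hjk : j ≤ k) :
    prodDesc (fun m => P m * D m * ↑(P m)⁻¹) j k
      = P k * prodDesc (fun m => D m * ↑((P m)⁻¹ * P (m - 1))) j k * ↑(P j)⁻¹ := by
  induction k, hjk using Nat.le_induction with
  | base => simp
  | succ m hjm ih =>
    rw [prodDesc_succ _ hjm, prodDesc_succ _ hjm, ih]
    simp only [Nat.add_sub_cancel, Units.val_mul, mul_assoc]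

lemma norm_prodDesc_le_pow [SeminormedRing M] (B : ℕ → M) {r : ℝ} (hB : ∀ m, ‖B m‖ ≤ r)
    {j k : ℕ} (hjk : j < k) : ‖prodDesc B j k‖ ≤ r ^ (k - j) := by
  induction k, hjk using Nat.le_induction with
  | base => simpa [prodDesc_succ B le_rfl] using hB (j + 1)
  | succ m hjm ih =>
    rw [prodDesc_succ B (by omega), show m + 1 - j = (m - j) + 1 by omega, pow_succ']
    exact (norm_mul_le _ _).trans <|
      mul_le_mul (hB _) ih (norm_nonneg _) ((norm_nonneg _).trans (hB 0))

end prodDesc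

lemma exp_mul_le_exp_max {t : ℝ} (ht₀ : 0 ≤ t) (ht₁ : t ≤ 1) (c : ℝ) :
    Real.exp (t * c) ≤ Real.exp (max c 0) := by
  rw [Real.exp_le_exp]
  rcases le_total 0 c with hc | hc
  · simpa [max_eq_left hc] using mul_le_of_le_one_left hc ht₁
  · simpa [max_eq_right hc] using mul_nonpos_of_nonneg_of_nonpos ht₀ hc

lemma norm_mul_le_exp {R : Type*} [SeminormedRing R] {a b : R} {x y : ℝ}
    (ha : ‖a‖ ≤ 1 + x) (hb : ‖b‖ ≤ 1 + y) : ‖a * b‖ ≤ Real.exp (x + y) := by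
  have hexp : ∀ z, 1 + z ≤ Real.exp z := fun z => by linarith [Real.add_one_le_exp z]
  calc ‖a * b‖ ≤ ‖a‖ * ‖b‖ := norm_mul_le a b
    _ ≤ Real.exp x * Real.exp y :=
      mul_le_mul (ha.trans (hexp x)) (hb.trans (hexp y)) (norm_nonneg b) (Real.exp_pos x).le
    _ = Real.exp (x + y) := (Real.exp_add x y).symm

theorem stability_product_bound_general
    (l : ℕ) (c₁ c₂ M : ℝ) :
    ∃ C : ℝ, ∀ ε : ℝ, 0 < ε →
      ∀ A D Λ : ℕ → Matrix (Fin l) (Fin l) ℂ,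
        (∀ k, IsUnit (Λ k)) →
        (∀ k, (D k).IsDiag) →
        (∀ k, A k = Λ k * D k * (Λ k)⁻¹) →
        (∀ k, ‖D k‖ ≤ 1 + c₁ * ε) →
        (∀ p, ‖(Λ p)⁻¹ * Λ (p - 1)‖ ≤ 1 + c₂ * ε) →
        (∀ k, ‖Λ k‖ ≤ M ∧ ‖(Λ k)⁻¹‖ ≤ M) →
        ∀ j k : ℕ, j < k → ((k : ℝ) - j) * ε ≤ 1 →
          ‖prodDesc A j k‖ ≤ C := by
  refine ⟨M * Real.exp (max (c₁ + c₂) 0) * M, ?_⟩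
  intro ε hε A D Λ hΛ _ hA hD hΛΛ hΛM j k hjk hkjε
  choose U hU using hΛ
  have hU_inv : ∀ k, ↑(U k)⁻¹ = (Λ k)⁻¹ := fun k => by
    rw [Matrix.coe_units_inv]; exact congrArg Inv.inv (hU k)
  have hconj : prodDesc A j k = Λ k * prodDesc (fun m => D m * ((Λ m)⁻¹ * Λ (m - 1))) j k
      * (Λ j)⁻¹ := by
    simpa [hU, hU_inv, ← hA] using prodDesc_conj U D hjk.le
  have hsteps : ‖prodDesc (fun m => D m * ((Λ m)⁻¹ * Λ (m - 1))) j k‖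
      ≤ Real.exp (max (c₁ + c₂) 0) := by
    refine (norm_prodDesc_le_pow _ (fun m => norm_mul_le_exp (hD m) (hΛΛ m)) hjk).trans ?_
    rw [← Real.exp_nat_mul, Nat.cast_sub hjk.le, ← add_mul, mul_comm (c₁ + c₂), ← mul_assoc]
    exact exp_mul_le_exp_max (by nlinarith [(Nat.cast_lt (α := ℝ)).2 hjk]) hkjε _
  have hM : 0 ≤ M := (norm_nonneg _).trans (hΛM 0).1
  rw [hconj]
  calc _ ≤ ‖Λ k‖ * _ * ‖(Λ j)⁻¹‖ := norm_mul₃_le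
    _ ≤ M * Real.exp (max (c₁ + c₂) 0) * M := by
      gcongr
      exacts [(hΛM k).1, (hΛM j).2]

theorem stability_product_bound
    (l : ℕ) (c₁ c₂ M : ℝ) (hc₁ : 0 ≤ c₁) (hc₂ : 0 ≤ c₂) (hM : 0 < M) :
    ∃ C : ℝ, ∀ ε : ℝ, 0 < ε →
      ∀ A D Λ : ℕ → Matrix (Fin l) (Fin l) ℂ,
        (∀ k, IsUnit (Λ k)) →
        (∀ k, (D k).IsDiag) →
        (∀ k, A k = Λ k * D k * (Λ k)⁻¹) →
        (∀ k, ‖D k‖ ≤ 1 + c₁ * ε) →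
        (∀ p, ‖(Λ p)⁻¹ * Λ (p - 1)‖ ≤ 1 + c₂ * ε) →
        (∀ k, ‖Λ k‖ ≤ M ∧ ‖(Λ k)⁻¹‖ ≤ M) →
        ∀ j k : ℕ, j < k → ((k : ℝ) - j) * ε ≤ 1 →
          ‖prodDesc A j k‖ ≤ C :=
  stability_product_bound_general l c₁ c₂ M
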